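/- arXiv:0710.0939 — 2 statements merged into one kernel-verified Lean document; each statement's English description precedes it below -/
import Mathlib

section
/- Let d ≥ 1 and let η ∈ X be a stabilizable sandpile configuration on ℤ^d. Then there does not exist a nonfinite legal toppling procedure for η; that is, every legal toppling procedure is finite for η. -/
open MeasureTheory Filter Topology
open scoped ENNReal NNReal

/-- Sites of the lattice `ℤ^d`. -/
abbrev Site (d : ℕ) := Fin d → ℤ

/-- Sandpile configurations: `X = ℕ^{ℤ^d}`. -/
abbrev Config (d : ℕ) := Site d → ℕ

/-- Nearest-neighbor adjacency on `ℤ^d` (`ℓ¹`-distance one). -/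
def Adjacent {d : ℕ} (x y : Site d) : Prop :=
  (∑ i, (x i - y i).natAbs) = 1

/-- Sum of the values of `f` over the `2d` nearest neighbors of `y`. -/
def nbrSum {d : ℕ} {M : Type*} [AddCommMonoid M] (f : Site d → M) (y : Site d) : M :=
  ∑ i : Fin d, (f (Function.update y i (y i + 1)) + f (Function.update y i (y i - 1)))

/-- The left limit `T(t-, x, η)` of a (monotone, `ℕ`-valued) toppling function. -/
noncomputable def leftVal {d : ℕ} (T : NNReal → Site d → Config d → ℕ)
    (t : NNReal) (x : Site d) (η : Config d) : ℕ :=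
  sSup ((fun s => T s x η) '' Set.Iio t)

/-- A toppling procedure on `ℤ^d` (Definition 2.1): a measurable map
`T : [0,∞) × ℤ^d × X → ℕ` such that (a) `T(0,x,η) = 0`; (b) `t ↦ T(t,x,η)` is
right-continuous, nondecreasing, with jumps of size at most one; (c) finitely many
jumps in every finite time interval; (d) no infinite backward chain of topplings. -/
structure TopplingProcedure (d : ℕ) where
  T : NNReal → Site d → Config d → ℕ
  measurable : ∀ x : Site d, Measurable fun p : NNReal × Config d => T p.1 x p.2
  init : ∀ (x : Site d) (η : Config d), T 0 x η = 0
  mono : ∀ (x : Site d) (η : Config d), Monotone fun t => T t x η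
  jumpLe : ∀ (x : Site d) (η : Config d) (t : NNReal), T t x η ≤ leftVal T t x η + 1
  rightCont : ∀ (x : Site d) (η : Config d) (t : NNReal),
    ∃ ε : NNReal, 0 < ε ∧ ∀ s, t ≤ s → s < t + ε → T s x η = T t x η
  finJumps : ∀ (x : Site d) (η : Config d) (b : NNReal),
    {t : NNReal | t ≤ b ∧ leftVal T t x η < T t x η}.Finite
  noBackwardChain : ∀ η : Config d, ¬ ∃ (xs : ℕ → Site d) (ts : ℕ → NNReal),
    (∀ i, Adjacent (xs (i + 1)) (xs i)) ∧ StrictAnti ts ∧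
    (∀ i, leftVal T (ts i) (xs i) η < T (ts i) (xs i) η)

namespace TopplingProcedure

variable {d : ℕ}

/-- The configuration `η_t = η − Δ T(t,·,η)` at time `t` (as a `ℤ`-valued function). -/
def configAt (P : TopplingProcedure d) (η : Config d) (t : NNReal) (y : Site d) : ℤ :=
  (η y : ℤ) + nbrSum (fun x => (P.T t x η : ℤ)) y - 2 * d * (P.T t y η : ℤ)

/-- The configuration `η_{t-}` just before time `t`. -/
noncomputable def configLeft (P : TopplingProcedure d) (η : Config d) (t : NNReal)
    (y : Site d) : ℤ :=
  (η y : ℤ) + nbrSum (fun x => (leftVal P.T t x η : ℤ)) y - 2 * d * (leftVal P.T t y η : ℤ)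

/-- Site `x` topples at time `t` if `T(t,x,η) > T(t-,x,η)`. -/
def TopplesAt (P : TopplingProcedure d) (η : Config d) (x : Site d) (t : NNReal) : Prop :=
  leftVal P.T t x η < P.T t x η

/-- A toppling procedure is legal if only unstable sites are toppled:
whenever `x` topples at time `t > 0`, `η_{t-}(x) ≥ 2d`. -/
def Legal (P : TopplingProcedure d) : Prop :=
  ∀ (η : Config d) (t : NNReal) (x : Site d), 0 < t → P.TopplesAt η x t →
    (2 * d : ℤ) ≤ P.configLeft η t x

/-- `T` is finite for `η` if `T(∞,x,η) = sup_t T(t,x,η) < ∞` for every `x`. -/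
def FiniteFor (P : TopplingProcedure d) (η : Config d) : Prop :=
  ∀ x : Site d, BddAbove (Set.range fun t => P.T t x η)

/-- `T(∞,x,η) = sup_{t ≥ 0} T(t,x,η)`. -/
noncomputable def Tinf (P : TopplingProcedure d) (η : Config d) (x : Site d) : ℕ :=
  sSup (Set.range fun t => P.T t x η)

/-- The limit configuration `η_∞ = η − Δ T(∞,·,η)` (as a `ℤ`-valued function). -/
noncomputable def finalConfig (P : TopplingProcedure d) (η : Config d) (y : Site d) : ℤ :=
  (η y : ℤ) + nbrSum (fun x => (P.Tinf η x : ℤ)) y - 2 * d * (P.Tinf η y : ℤ)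

/-- `T` is stabilizing for `η` if it is finite for `η` and the limit configuration
`η_∞` is stable, i.e. takes values in `{0, 1, …, 2d−1}`. -/
def StabilizingFor (P : TopplingProcedure d) (η : Config d) : Prop :=
  P.FiniteFor η ∧ ∀ y : Site d, 0 ≤ P.finalConfig η y ∧ P.finalConfig η y ≤ 2 * d - 1

end TopplingProcedure

/-- A configuration `η` is stabilizable if there exists a stabilizing legal
toppling procedure for `η`. -/
def Stabilizable {d : ℕ} (η : Config d) : Prop :=
  ∃ P : TopplingProcedure d, P.Legal ∧ P.StabilizingFor η

/-- The shift of a configuration by a lattice vector `v`. -/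
def shiftConfig {d : ℕ} (v : Site d) (η : Config d) : Config d := fun x => η (x + v)

/-- A probability measure on `X` is translation invariant if it is invariant
under all shifts of `ℤ^d`. -/
def TransInvariant {d : ℕ} (μ : Measure (Config d)) : Prop :=
  ∀ v : Site d, Measure.map (shiftConfig v) μ = μ

/-- `μ` is a product measure: under `μ` the coordinates `(η(x))` are i.i.d. -/
def IsProductMeasure {d : ℕ} (μ : Measure (Config d)) : Prop :=
  ProbabilityTheory.iIndepFun
      (fun (x : Site d) (η : Config d) => η x) μ ∧
    ∀ x : Site d, Measure.map (fun η : Config d => η x) μ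
      = Measure.map (fun η : Config d => η (0 : Site d)) μ

/-- `x` belongs to the set `T_∞` of sites that topple during stabilization of `η`. -/
def ToppledInf {d : ℕ} (η : Config d) (x : Site d) : Prop :=
  ∃ P : TopplingProcedure d, P.Legal ∧ P.StabilizingFor η ∧ 0 < P.Tinf η x

/-- `x` belongs to `W_∞ = T_∞ ∪ {x : η_∞(x) > 0}`: `x` topples during stabilization
of `η`, or is nonempty after stabilization. -/
def InWinf {d : ℕ} (η : Config d) (x : Site d) : Prop :=
  ∃ P : TopplingProcedure d, P.Legal ∧ P.StabilizingFor η ∧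
    (0 < P.Tinf η x ∨ 0 < P.finalConfig η x)

/-- `y` lies in the cluster of `x` of the set `S`: `x` and `y` are joined by a
nearest-neighbor path inside `S`. -/
def InClusterOf {d : ℕ} (S : Site d → Prop) (x y : Site d) : Prop :=
  ∃ (k : ℕ) (f : ℕ → Site d), f 0 = x ∧ f k = y ∧ (∀ i ≤ k, S (f i)) ∧
    ∀ i < k, Adjacent (f i) (f (i + 1))


/-!
A legal toppling procedure `T` can never topple a site `x` more than `u x` times, where `u` is the
final odometer of a stabilizing procedure (least action principle). Indeed, at the first time `s`
at which `x` topples for the `(u x + 1)`-st time, legality gives `η_{s-}(x) ≥ 2d` while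
stability gives `η(x) + Σ_{y ∼ x} u y - 2d u x ≤ 2d - 1`; hence some neighbour `y` has already
toppled more than `u y` times before `s`. Iterating produces an infinite backward chain of
topplings, which a toppling procedure excludes.
-/

theorem adjacent_update_add {d : ℕ} (x : Site d) (i : Fin d) {e : ℤ} (he : e.natAbs = 1) :
    Adjacent (Function.update x i (x i + e)) x := by
  unfold Adjacent
  rw [Finset.sum_eq_single_of_mem i (Finset.mem_univ i)]
  · simp [he]
  · intro j _ hj
    simp [Function.update_of_ne hj]

theorem exists_adjacent_lt_of_nbrSum_lt {d : ℕ} {M : Type*} [AddCommMonoid M] [LinearOrder M]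
    [AddLeftMono M] [AddRightMono M] {f g : Site d → M} {x : Site d}
    (h : nbrSum f x < nbrSum g x) : ∃ y, Adjacent y x ∧ f y < g y := by
  obtain ⟨i, -, hi⟩ := Finset.exists_lt_of_sum_lt h
  rcases lt_or_lt_of_add_lt_add hi with hup | hdown
  · exact ⟨_, adjacent_update_add x i (e := 1) rfl, hup⟩
  · refine ⟨_, ?_, hdown⟩
    simpa [sub_eq_add_neg] using adjacent_update_add x i (e := -1) rfl

namespace TopplingProcedure

variable {d : ℕ} (T : TopplingProcedure d) (η : Config d)

theorem leftVal_le {x : Site d} {s : NNReal} {n : ℕ} (h : ∀ u < s, T.T u x η ≤ n) :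
    leftVal T.T s x η ≤ n :=
  csSup_le' (by rintro m ⟨u, hu, rfl⟩; exact h u hu)

theorem exists_lt_of_lt_leftVal {x : Site d} {s : NNReal} {n : ℕ}
    (h : n < leftVal T.T s x η) : ∃ u < s, n < T.T u x η := by
  by_contra! hc
  exact (T.leftVal_le η hc).not_gt h

def CrossesAt (n : ℕ) (x : Site d) (s : NNReal) : Prop :=
  0 < s ∧ leftVal T.T s x η = n ∧ T.TopplesAt η x s

/-- The witness is the first time at which `x` has toppled more than `n` times. -/
theorem exists_crossesAt_le {n : ℕ} {x : Site d} {t : NNReal} (h : n < T.T t x η) :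
    ∃ s ≤ t, T.CrossesAt η n x s := by
  set U : Set NNReal := {u | n < T.T u x η}
  set m := sInf U
  have hU : BddBelow U := OrderBot.bddBelow U
  have hm_le : m ≤ t := csInf_le hU h
  have hm_mem : n < T.T m x η := by
    obtain ⟨ε, hε, hconst⟩ := T.rightCont x η m
    obtain ⟨u, hu, hum⟩ := exists_lt_of_csInf_lt ⟨t, h⟩ (lt_add_of_pos_right m hε)
    rwa [← hconst u (csInf_le hU hu) hum]
  have hleft : leftVal T.T m x η ≤ n :=
    T.leftVal_le η fun v hv => not_lt.mp fun hvU => (csInf_le hU hvU).not_gt hv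
  have hjump := T.jumpLe x η m
  have hm_pos : 0 < m := by
    refine pos_iff_ne_zero.mpr fun hm0 => ?_
    rw [hm0, T.init x η] at hm_mem
    exact Nat.not_lt_zero n hm_mem
  exact ⟨m, hm_le, hm_pos, by omega, by unfold TopplesAt; omega⟩

def ToppledBefore (p q : Site d × NNReal) : Prop :=
  Adjacent p.1 q.1 ∧ p.2 < q.2 ∧ T.TopplesAt η p.1 p.2

theorem wellFounded_toppledBefore : WellFounded (T.ToppledBefore η) := by
  refine wellFounded_iff_isEmpty_descending_chain.mpr ⟨fun ⟨f, hf⟩ => ?_⟩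
  refine T.noBackwardChain η ⟨fun i => (f (i + 1)).1, fun i => (f (i + 1)).2, ?_, ?_, ?_⟩
  · exact fun i => (hf (i + 1)).1
  · exact strictAnti_nat_of_succ_lt fun i => (hf (i + 1)).2.1
  · exact fun i => (hf i).2.2

variable {T η}

theorem exists_toppledBefore_crossesAt (hT : T.Legal) {u : Site d → ℕ}
    (hu : ∀ y, (η y : ℤ) + nbrSum (fun z => (u z : ℤ)) y - 2 * d * u y ≤ 2 * d - 1)
    {x : Site d} {s : NNReal} (hx : T.CrossesAt η (u x) x s) :
    ∃ p, T.ToppledBefore η p (x, s) ∧ T.CrossesAt η (u p.1) p.1 p.2 := by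
  obtain ⟨hs, hleft, htop⟩ := hx
  have hlegal := hT η s x hs htop
  have hstable := hu x
  unfold configLeft at hlegal
  rw [hleft] at hlegal
  obtain ⟨y, hyx, hy⟩ := exists_adjacent_lt_of_nbrSum_lt
    (f := fun z => (u z : ℤ)) (g := fun z => (leftVal T.T s z η : ℤ)) (x := x) (by omega)
  obtain ⟨r, hrs, hr⟩ := T.exists_lt_of_lt_leftVal η (Int.ofNat_lt.mp hy)
  obtain ⟨s', hs'r, hs'⟩ := T.exists_crossesAt_le η hr
  exact ⟨(y, s'), ⟨hyx, hs'r.trans_lt hrs, hs'.2.2⟩, hs'⟩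

theorem T_le_of_stable (hT : T.Legal) {u : Site d → ℕ}
    (hu : ∀ y, (η y : ℤ) + nbrSum (fun z => (u z : ℤ)) y - 2 * d * u y ≤ 2 * d - 1)
    (t : NNReal) (x : Site d) : T.T t x η ≤ u x := by
  by_contra! hlt
  obtain ⟨s, -, hs⟩ := T.exists_crossesAt_le η hlt
  obtain ⟨p, hp, hmin⟩ := (T.wellFounded_toppledBefore η).has_min
    {p | T.CrossesAt η (u p.1) p.1 p.2} ⟨(x, s), hs⟩
  obtain ⟨q, hqp, hq⟩ := exists_toppledBefore_crossesAt hT hu hp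
  exact hmin q hq hqp

end TopplingProcedure

theorem statement2_general (d : ℕ) (η : Config d) (hη : Stabilizable η)
    (T : TopplingProcedure d) (hT : T.Legal) : T.FiniteFor η := by
  obtain ⟨P, -, -, hstable⟩ := hη
  intro x
  refine ⟨P.Tinf η x, ?_⟩
  rintro _ ⟨t, rfl⟩
  exact TopplingProcedure.T_le_of_stable hT (fun y => (hstable y).2) t x

/-- Theorem 2.8(3): for stabilizable `η` there is no nonfinite legal toppling
procedure: every legal toppling procedure is finite for `η`. -/
theorem statement2 (d : ℕ) (hd : 1 ≤ d) (η : Config d) (hη : Stabilizable η)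
    (T : TopplingProcedure d) (hT : T.Legal) : T.FiniteFor η :=
  statement2_general d η hη T hT
end

section
/- Let d ≥ 1, let η ∈ X be a sandpile configuration on ℤ^d, and let T be a stabilizing legal toppling procedure for η. Then there is at least one site x ∈ ℤ^d that never topples, i.e., T(∞, x, η) = 0. -/
open MeasureTheory Filter Topology
open scoped ENNReal NNReal

/-! Suppose every site topples and let `τ(x)` be the time of the last toppling of `x`.
Just before `τ(x)` the site `x` holds at least `2d` grains (legality), and it ends with at most
`2d - 1`, although it loses exactly `2d` in its own last toppling. So its `2d` neighbours topple
fewer than `2d` times after `τ(x)`, and some neighbour `y` has already finished: `τ(y) < τ(x)`.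
Iterating produces an infinite backward chain of topplings, which toppling procedures exclude. -/

lemma adjacent_update_add_one {d : ℕ} (y : Site d) (i : Fin d) :
    Adjacent (Function.update y i (y i + 1)) y := by
  unfold Adjacent
  rw [Finset.sum_eq_single i (fun j _ hj => by simp [Function.update_of_ne hj]) (by simp)]
  simp

lemma adjacent_update_sub_one {d : ℕ} (y : Site d) (i : Fin d) :
    Adjacent (Function.update y i (y i - 1)) y := by
  unfold Adjacent
  rw [Finset.sum_eq_single i (fun j _ hj => by simp [Function.update_of_ne hj]) (by simp)]
  simp

lemma exists_adjacent_lt_of_nbrSum_lt_s3 {d : ℕ} {f : Site d → ℤ} {y : Site d} {c : ℤ}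
    (h : nbrSum f y < 2 * d * c) : ∃ z, Adjacent z y ∧ f z < c := by
  by_contra! hge
  have hsum : ∑ _i : Fin d, 2 * c ≤ nbrSum f y :=
    Finset.sum_le_sum fun i _ => by
      linarith [hge _ (adjacent_update_add_one y i), hge _ (adjacent_update_sub_one y i)]
  simp only [Finset.sum_const, Finset.card_univ, Fintype.card_fin, nsmul_eq_mul] at hsum
  linarith

lemma nbrSum_sub {d : ℕ} {M : Type*} [AddCommGroup M] (f g : Site d → M) (y : Site d) :
    nbrSum (f - g) y = nbrSum f y - nbrSum g y := by
  simp only [nbrSum, Pi.sub_apply, ← Finset.sum_sub_distrib]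
  exact Finset.sum_congr rfl fun _ _ => by abel

namespace TopplingProcedure

variable {d : ℕ} (P : TopplingProcedure d) {η : Config d}

lemma T_le_Tinf (hfin : P.FiniteFor η) (t : NNReal) (x : Site d) : P.T t x η ≤ P.Tinf η x :=
  le_csSup (hfin x) ⟨t, rfl⟩

/-- The supremum defining the left limit is a maximum, since `T` is `ℕ`-valued and bounded. -/
lemma exists_lt_T_eq_leftVal (hfin : P.FiniteFor η) {t : NNReal} (ht : 0 < t) (x : Site d) :
    ∃ s < t, P.T s x η = leftVal P.T t x η :=
  Nat.sSup_mem (Set.Nonempty.image _ ⟨0, ht⟩) ((hfin x).mono (Set.image_subset_range _ _))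

variable (η) in
noncomputable def lastToppleTime (x : Site d) : NNReal :=
  sInf {t | P.T t x η = P.Tinf η x}

lemma lastToppleTime_le {x : Site d} {t : NNReal} (h : P.T t x η = P.Tinf η x) :
    P.lastToppleTime η x ≤ t :=
  csInf_le (OrderBot.bddBelow _) h

/-- The infimum is attained by right-continuity. -/
lemma T_lastToppleTime (hfin : P.FiniteFor η) (x : Site d) :
    P.T (P.lastToppleTime η x) x η = P.Tinf η x := by
  have hne : {t | P.T t x η = P.Tinf η x}.Nonempty :=
    Nat.sSup_mem (Set.range_nonempty _) (hfin x)
  obtain ⟨ε, hε, hconst⟩ := P.rightCont x η (P.lastToppleTime η x)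
  obtain ⟨s, hs, hslt⟩ := exists_lt_of_csInf_lt hne (lt_add_of_pos_right _ hε)
  rw [← hconst s (P.lastToppleTime_le hs) hslt]
  exact hs

lemma lastToppleTime_pos (hfin : P.FiniteFor η) {x : Site d} (hx : P.Tinf η x ≠ 0) :
    0 < P.lastToppleTime η x := by
  refine pos_iff_ne_zero.2 fun h0 => hx ?_
  rw [← P.T_lastToppleTime hfin x, h0, P.init]

lemma leftVal_lastToppleTime_add_one (hfin : P.FiniteFor η) {x : Site d}
    (hx : P.Tinf η x ≠ 0) :
    leftVal P.T (P.lastToppleTime η x) x η + 1 = P.Tinf η x := by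
  obtain ⟨s, hs, hT⟩ := P.exists_lt_T_eq_leftVal hfin (P.lastToppleTime_pos hfin hx) x
  have hne : P.T s x η ≠ P.Tinf η x := fun h => (P.lastToppleTime_le h).not_gt hs
  have hjump := P.jumpLe x η (P.lastToppleTime η x)
  rw [P.T_lastToppleTime hfin x] at hjump
  have := P.T_le_Tinf hfin s x
  omega

lemma topplesAt_lastToppleTime (hfin : P.FiniteFor η) {x : Site d} (hx : P.Tinf η x ≠ 0) :
    P.TopplesAt η x (P.lastToppleTime η x) := by
  have := P.leftVal_lastToppleTime_add_one hfin hx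
  rw [TopplesAt, P.T_lastToppleTime hfin x]
  omega

lemma lastToppleTime_lt_of_Tinf_le_leftVal (hfin : P.FiniteFor η) {t : NNReal} (ht : 0 < t)
    {y : Site d} (hy : P.Tinf η y ≤ leftVal P.T t y η) : P.lastToppleTime η y < t := by
  obtain ⟨s, hs, hT⟩ := P.exists_lt_T_eq_leftVal hfin ht y
  have hfinal : P.T s y η = P.Tinf η y := le_antisymm (P.T_le_Tinf hfin s y) (hT ▸ hy)
  exact (P.lastToppleTime_le hfinal).trans_lt hs

variable (η) in
lemma finalConfig_sub_configLeft (t : NNReal) (x : Site d) :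
    P.finalConfig η x - P.configLeft η t x =
      nbrSum (fun z => (P.Tinf η z : ℤ) - leftVal P.T t z η) x
        - 2 * d * ((P.Tinf η x : ℤ) - leftVal P.T t x η) := by
  rw [show (fun z => (P.Tinf η z : ℤ) - leftVal P.T t z η) =
    (fun z => (P.Tinf η z : ℤ)) - fun z => (leftVal P.T t z η : ℤ) from rfl, nbrSum_sub]
  simp only [finalConfig, configLeft]
  ring

lemma exists_adjacent_lastToppleTime_lt (hL : P.Legal) (hstab : P.StabilizingFor η)
    (hall : ∀ z, P.Tinf η z ≠ 0) (x : Site d) :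
    ∃ y, Adjacent y x ∧ P.lastToppleTime η y < P.lastToppleTime η x := by
  obtain ⟨hfin, hstable⟩ := hstab
  set τ := P.lastToppleTime η x
  have hτ : 0 < τ := P.lastToppleTime_pos hfin (hall x)
  have hbefore := hL η τ x hτ (P.topplesAt_lastToppleTime hfin (hall x))
  have hlast : (leftVal P.T τ x η : ℤ) + 1 = P.Tinf η x := by
    exact_mod_cast P.leftVal_lastToppleTime_add_one hfin (hall x)
  have hlate : nbrSum (fun z => (P.Tinf η z : ℤ) - leftVal P.T τ z η) x < 2 * d * 1 := by
    have hdiff := P.finalConfig_sub_configLeft η τ x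
    rw [← hlast] at hdiff
    linarith [(hstable x).2]
  obtain ⟨y, hadj, hy⟩ := exists_adjacent_lt_of_nbrSum_lt_s3 hlate
  refine ⟨y, hadj, P.lastToppleTime_lt_of_Tinf_le_leftVal hfin hτ ?_⟩
  have : (P.Tinf η y : ℤ) ≤ leftVal P.T τ y η := by linarith
  exact_mod_cast this

end TopplingProcedure

theorem statement3_general (d : ℕ) (η : Config d)
    (T : TopplingProcedure d) (hT : T.Legal) (hstab : T.StabilizingFor η) :
    ∃ x : Site d, T.Tinf η x = 0 := by
  by_contra! hall
  choose prev hadj hlt using T.exists_adjacent_lastToppleTime_lt hT hstab hall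
  refine T.noBackwardChain η ⟨fun n => prev^[n] 0, fun n => T.lastToppleTime η (prev^[n] 0),
    fun n => ?_, strictAnti_nat_of_succ_lt fun n => ?_,
    fun n => T.topplesAt_lastToppleTime hstab.1 (hall _)⟩
  · simpa only [Function.iterate_succ_apply'] using hadj _
  · simpa only [Function.iterate_succ_apply'] using hlt _

/-- Theorem 2.8(4): if `T` is a stabilizing legal toppling procedure for `η`, then
at least one site never topples. -/
theorem statement3 (d : ℕ) (hd : 1 ≤ d) (η : Config d)
    (T : TopplingProcedure d) (hT : T.Legal) (hstab : T.StabilizingFor η) :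
    ∃ x : Site d, T.Tinf η x = 0 :=
  statement3_general d η T hT hstab
end
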